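/- Let F be a free group of rank m ≥ 2, φ ∈ Aut(F) with [φ] of finite order k > 1 in Out(F), and let Z = Z(F ⋊_φ ⟨t⟩) be the center of the mapping torus. Then the natural map F → (F ⋊_φ ⟨t⟩)/Z is injective and its image has index k in the quotient. -/

import Mathlib

open SemidirectProduct Multiplicative

/-- The mapping torus `F ⋊_φ ⟨t⟩` of an automorphism `φ` of `F`: the semidirect
product `F ⋊ ℤ` in which the stable letter `t` satisfies `t⁻¹ x t = φ x`. -/
abbrev MappingTorus {F : Type*} [Group F] (φ : MulAut F) : Type _ :=
  SemidirectProduct F (Multiplicative ℤ) ((zpowersHom (MulAut F)) φ⁻¹)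

/-- The stable letter `t` of the mapping torus. -/
def stableLetter {F : Type*} [Group F] (φ : MulAut F) : MappingTorus φ :=
  inr (ofAdd 1)

/-!
A free group of rank at least two is centreless: commuting elements generate an abelian subgroup,
which is free by Nielsen–Schreier and hence cyclic, and exponent sums show that the cyclic
subgroups containing two distinct generators meet trivially.

For a centreless `F`, an element `(a, tⁿ)` of `F ⋊_φ ⟨t⟩` is central iff `φ a = a` and
`φⁿ = conj a`, and the second condition implies the first. Hence the centre meets `F` trivially,
and its image in `⟨t⟩ ≅ ℤ` is `{n | [φ]ⁿ = 1 in Out F} = kℤ`. The index of the image of `F` in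
the quotient by the centre is the index of that image in `ℤ`, namely `k`.
-/

open Subgroup (center closure zpowers mem_zpowers isMulCommutative_closure subset_closure)

namespace FreeGroup

variable {X : Type*}

theorem eq_of_commute_of {i j : X} (h : Commute (of i) (of j)) : i = j := by
  classical
  by_contra hij
  have := congrArg (lift fun x : X =>
    if x = i then Equiv.swap (0 : Fin 3) 1 else if x = j then Equiv.swap 1 2 else 1) h.eq
  simp only [_root_.map_mul, lift_apply_of, if_true, if_neg (Ne.symm hij)] at this
  exact absurd this (by decide)

theorem isCyclic_of_subsingleton [Subsingleton X] : IsCyclic (FreeGroup X) := by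
  cases isEmpty_or_nonempty X
  · infer_instance
  · have := uniqueOfSubsingleton (Classical.arbitrary X)
    infer_instance

end FreeGroup

theorem IsFreeGroup.isCyclic_of_isMulCommutative {G : Type*} [Group G] [IsFreeGroup G]
    [IsMulCommutative G] : IsCyclic G := by
  let e := mulEquiv G
  have : Subsingleton (Generators G) :=
    ⟨fun i j => FreeGroup.eq_of_commute_of <| by
      simpa using Commute.map (mul_comm' _ _ : Commute (e (.of i)) (e (.of j))) e.symm⟩
  have := FreeGroup.isCyclic_of_subsingleton (X := Generators G)
  exact isCyclic_of_surjective e.toMonoidHom e.surjective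

namespace FreeGroup

variable {X : Type*}

theorem exists_mem_zpowers_of_commute {x y : FreeGroup X} (h : Commute x y) :
    ∃ r, x ∈ zpowers r ∧ y ∈ zpowers r := by
  -- `H` is free by Nielsen–Schreier (`subgroupIsFreeOfIsFree`).
  let H := closure ({x, y} : Set (FreeGroup X))
  have hx : x ∈ H := subset_closure (by simp)
  have hy : y ∈ H := subset_closure (by simp)
  have : IsMulCommutative H := isMulCommutative_closure <| by
    rintro a (rfl | rfl) b (rfl | rfl)
    exacts [rfl, h.eq, h.symm.eq, rfl]
  obtain ⟨r, hr⟩ := (IsFreeGroup.isCyclic_of_isMulCommutative (G := H)).exists_generator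
  refine ⟨r, ?_, ?_⟩
  · obtain ⟨n, hn⟩ := hr ⟨x, hx⟩
    exact ⟨n, congrArg Subtype.val hn⟩
  · obtain ⟨n, hn⟩ := hr ⟨y, hy⟩
    exact ⟨n, congrArg Subtype.val hn⟩

section ExponentSum

variable [DecidableEq X]

def exponentSum (i : X) : FreeGroup X →* Multiplicative ℤ :=
  lift (Pi.mulSingle i (ofAdd 1))

@[simp]
theorem exponentSum_of_self (i : X) : exponentSum i (of i) = ofAdd 1 := by
  simp [exponentSum]

@[simp]
theorem exponentSum_of_of_ne {i j : X} (h : j ≠ i) : exponentSum i (of j) = 1 := by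
  simp [exponentSum, h]

end ExponentSum

theorem mem_zpowers_of_of_commute {x : FreeGroup X} {i : X} (h : Commute x (of i)) :
    x ∈ zpowers (of i) := by
  classical
  obtain ⟨r, ⟨p, rfl⟩, q, hq⟩ := exists_mem_zpowers_of_commute h
  have hq1 : q * toAdd (exponentSum i r) = 1 := by
    simpa using congrArg (toAdd ∘ exponentSum i) hq
  have hr : r = of i ^ q := by
    rw [← hq, ← zpow_mul, Int.isUnit_mul_self (IsUnit.of_mul_eq_one _ hq1), zpow_one]
  exact hr ▸ zpow_mem (zpow_mem (mem_zpowers _) _) _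

theorem center_eq_bot [Nontrivial X] : center (FreeGroup X) = ⊥ := by
  classical
  obtain ⟨i, j, hij⟩ := exists_pair_ne X
  refine (Subgroup.eq_bot_iff_forall _).2 fun x hx => ?_
  have hcomm : ∀ l, Commute x (of l) := fun l => (Subgroup.mem_center_iff.1 hx (of l)).symm
  obtain ⟨s, rfl⟩ := Subgroup.mem_zpowers_iff.1 (mem_zpowers_of_of_commute (hcomm i))
  obtain ⟨t, ht⟩ := Subgroup.mem_zpowers_iff.1 (mem_zpowers_of_of_commute (hcomm j))
  have : s = 0 := by simpa [hij.symm] using congrArg (toAdd ∘ exponentSum i) ht.symm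
  rw [this, zpow_zero]

end FreeGroup

namespace MulAut

variable {F : Type*} [Group F]

theorem conj_map (φ : MulAut F) (a : F) : conj (φ a) = φ * conj a * φ⁻¹ := by
  ext x
  simp [MulAut.inv_def]

instance normal_range_conj : (conj : F →* MulAut F).range.Normal :=
  ⟨by rintro _ ⟨a, rfl⟩ φ; exact ⟨φ a, conj_map φ a⟩⟩

theorem conj_injective_of_center_eq_bot (hF : center F = ⊥) :
    Function.Injective (conj : F →* MulAut F) := by
  refine (injective_iff_map_eq_one _).2 fun a ha => ?_
  rw [← Subgroup.mem_bot, ← hF, Subgroup.mem_center_iff]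
  intro x
  have := DFunLike.congr_fun ha x
  rw [conj_apply, one_apply] at this
  exact (mul_inv_eq_iff_eq_mul.1 this).symm

theorem apply_eq_of_zpow_eq_conj (hF : center F = ⊥) {φ : MulAut F} {n : ℤ} {a : F}
    (h : φ ^ n = conj a) : φ a = a :=
  conj_injective_of_center_eq_bot hF <| by
    rw [conj_map, ← h, (Commute.self_zpow φ n).eq, mul_inv_cancel_right]

end MulAut

theorem Subgroup.index_comap_zpowersHom {G : Type*} [Group G] (N : Subgroup G) [N.Normal]
    (g : G) : (N.comap (zpowersHom G g)).index = orderOf (g : G ⧸ N) := by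
  have : N.comap (zpowersHom G g) = (zpowersHom (G ⧸ N) g).ker := by
    ext n
    simp [← QuotientGroup.mk_zpow, QuotientGroup.eq_one_iff]
  rw [this, index_ker, Subgroup.range_zpowersHom, Nat.card_zpowers]

namespace SemidirectProduct

variable {N G : Type*} [Group N] [Group G] {ψ : G →* MulAut N}

theorem mem_center_of_inl_mem_center {n : N} (h : (inl n : N ⋊[ψ] G) ∈ center (N ⋊[ψ] G)) :
    n ∈ center N :=
  Subgroup.mem_center_iff.2 fun x =>
    inl_injective (by simpa using Subgroup.mem_center_iff.1 h (inl x))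

theorem index_range_inl_comp_mk' (K : Subgroup (N ⋊[ψ] G)) [K.Normal] :
    ((QuotientGroup.mk' K).comp (inl : N →* N ⋊[ψ] G)).range.index = (K.map rightHom).index := by
  rw [MonoidHom.range_comp, Subgroup.index_map, QuotientGroup.ker_mk',
    MonoidHom.range_eq_top_of_surjective _ (QuotientGroup.mk'_surjective _), Subgroup.index_top,
    mul_one, range_inl_eq_ker_rightHom, sup_comm, ← Subgroup.comap_map_eq,
    Subgroup.index_comap_of_surjective _ rightHom_surjective]

end SemidirectProduct

namespace MappingTorus

variable {F : Type*} [Group F] {φ : MulAut F}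

theorem mem_center_iff {g : MappingTorus φ} :
    g ∈ center (MappingTorus φ) ↔ φ g.left = g.left ∧ φ ^ toAdd g.right = MulAut.conj g.left := by
  constructor
  · intro hg
    have hleft : ∀ x, x * g.left = g.left * (φ⁻¹ ^ toAdd g.right) x := fun x => by
      simpa using congrArg left (Subgroup.mem_center_iff.1 hg (inl x))
    have hfix : φ⁻¹ g.left = g.left := by
      simpa using congrArg left (Subgroup.mem_center_iff.1 hg (inr (ofAdd 1)))
    refine ⟨by simpa using congrArg φ hfix.symm, inv_injective ?_⟩
    ext x
    rw [← inv_zpow, MulAut.conj_inv_apply, eq_inv_mul_of_mul_eq (hleft x).symm, mul_assoc]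
  · rintro ⟨hfix, hconj⟩
    have hstab : φ ∈ MulAction.stabilizer (MulAut F) g.left := hfix
    refine Subgroup.mem_center_iff.2 fun h => SemidirectProduct.ext ?_ (mul_comm _ _)
    have hfix' : (φ⁻¹ ^ toAdd h.right) g.left = g.left :=
      Subgroup.zpow_mem _ (Subgroup.inv_mem _ hstab) _
    show h.left * (φ⁻¹ ^ toAdd h.right) g.left = g.left * (φ⁻¹ ^ toAdd g.right) h.left
    rw [hfix', inv_zpow, hconj, MulAut.conj_inv_apply]
    group

theorem map_rightHom_center (hF : center F = ⊥) :
    (center (MappingTorus φ)).map rightHom =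
      (MulAut.conj : F →* MulAut F).range.comap (zpowersHom _ φ) := by
  ext n
  constructor
  · rintro ⟨g, hg, rfl⟩
    exact ⟨g.left, (mem_center_iff.1 hg).2.symm⟩
  · rintro ⟨a, ha⟩
    exact ⟨⟨a, n⟩, mem_center_iff.2 ⟨MulAut.apply_eq_of_zpow_eq_conj hF ha.symm, ha.symm⟩, rfl⟩

end MappingTorus

/-- for `F` free of rank `m ≥ 2` and `[φ]` of finite order `k > 1`
in `Out(F)`, the natural map `F → (F ⋊_φ ⟨t⟩)/Z` is injective and its image has
index `k`. -/
theorem fibre_embeds_in_quotient_by_center {m : ℕ} (hm : 2 ≤ m)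
    (φ : MulAut (FreeGroup (Fin m))) (k : ℕ) (hk : 1 < k)
    (hφk : ∃ f₀, φ ^ k = MulAut.conj f₀)
    (hmin : ∀ j : ℕ, 1 ≤ j → j < k → ¬ ∃ g, φ ^ j = MulAut.conj g) :
    Function.Injective
        ((QuotientGroup.mk' (Subgroup.center (MappingTorus φ))).comp
          (inl : FreeGroup (Fin m) →* MappingTorus φ)) ∧
      ((QuotientGroup.mk' (Subgroup.center (MappingTorus φ))).comp
          (inl : FreeGroup (Fin m) →* MappingTorus φ)).range.index = k := by
  have : Nontrivial (Fin m) := Fin.nontrivial_iff_two_le.2 hm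
  have hF := FreeGroup.center_eq_bot (X := Fin m)
  have horder : orderOf (φ : MulAut (FreeGroup (Fin m)) ⧸ MulAut.conj.range) = k := by
    rw [orderOf_eq_iff (by omega)]
    simp only [← QuotientGroup.mk_pow, ne_eq, QuotientGroup.eq_one_iff, MonoidHom.mem_range]
    exact ⟨hφk.imp fun f₀ h => h.symm, fun j hj hj0 h => hmin j hj0 hj (h.imp fun g h => h.symm)⟩
  refine ⟨(injective_iff_map_eq_one _).2 fun f hf => ?_, ?_⟩
  · rw [← Subgroup.mem_bot, ← hF]
    exact mem_center_of_inl_mem_center ((QuotientGroup.eq_one_iff _).1 hf)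
  · rw [index_range_inl_comp_mk', MappingTorus.map_rightHom_center hF,
      Subgroup.index_comap_zpowersHom, horder]
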